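/- arXiv:2509.07125 — 5 statements merged into one kernel-verified Lean document; each statement's English description precedes it below -/
import Mathlib

section
/- Let (H,R) be a finite-dimensional involutory quasitriangular Hopf algebra over a field k which admits a two-sided integral μ ∈ H* and a two-sided cointegral e ∈ H with μ(e) = 1. Then the Drinfeld element u = Σᵢ S(tᵢ)sᵢ satisfies S(u) = u. -/
/-!
The cointegral identities `Δe·(a ⊗ 1) = Δe·(1 ⊗ S a)` and `(1 ⊗ a)·Δe = (S a ⊗ 1)·Δe` turn the
slices of `Δe` against the integral `μ` into `Σ xᵢ ⊗ yᵢ ↦ Σ S(xᵢ) yᵢ` and `Σ xᵢ ⊗ yᵢ ↦ Σ xᵢ S(yᵢ)`.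
Slicing `Δᶜᵒᵖ(e)·R = R·Δ(e)` with `μ` therefore gives `u = Σ S(tᵢ) sᵢ = Σ sᵢ S(tᵢ)`.
Since `S` is an involutive antiautomorphism, `(S ⊗ id) R = R⁻¹ = (id ⊗ S) R`, and so
`S(Σ sᵢ S(tᵢ)) = Σ tᵢ S(sᵢ) = Σ S(tᵢ) sᵢ = u`.
-/

open TensorProduct Coalgebra HopfAlgebra LinearMap WithConv

namespace TensorProduct

variable {k A B : Type*} [CommSemiring k] [Semiring A] [Algebra k A] [Semiring B] [Algebra k B]

lemma lid_rTensor_mul_one_tmul (f : A →ₗ[k] k) (W : A ⊗[k] B) (c : B) :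
    TensorProduct.lid k B (rTensor B f (W * (1 ⊗ₜ c))) =
      TensorProduct.lid k B (rTensor B f W) * c := by
  induction W using TensorProduct.induction_on with
  | zero => simp
  | tmul a b => simp
  | add X Y hX hY => simp only [add_mul, map_add, hX, hY]

lemma rid_lTensor_tmul_one_mul (f : B →ₗ[k] k) (W : A ⊗[k] B) (c : A) :
    TensorProduct.rid k A (lTensor A f ((c ⊗ₜ 1) * W)) =
      c * TensorProduct.rid k A (lTensor A f W) := by
  induction W using TensorProduct.induction_on with
  | zero => simp
  | tmul a b => simp
  | add X Y hX hY => simp only [mul_add, map_add, hX, hY]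

end TensorProduct

namespace AlgHom

variable {k H A : Type*} [CommSemiring k] [Semiring H] [HopfAlgebra k H] [Semiring A] [Algebra k A]

lemma toConv_convMul_toConv_comp_antipode (f : H →ₐ[k] A) :
    toConv f.toLinearMap * toConv (f.toLinearMap ∘ₗ antipode k) = 1 := by
  have h := algHom_comp_convMul_distrib f (toConv LinearMap.id) (toConv (antipode k))
  rw [id_mul_antipode, ofConv_toConv, ofConv_toConv, LinearMap.comp_id] at h
  apply WithConv.ofConv_injective
  rw [← h]
  ext; simp

lemma toConv_comp_antipode_convMul_toConv (f : H →ₐ[k] A) :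
    toConv (f.toLinearMap ∘ₗ antipode k) * toConv f.toLinearMap = 1 := by
  have h := algHom_comp_convMul_distrib f (toConv (antipode k)) (toConv LinearMap.id)
  rw [antipode_mul_id, ofConv_toConv, ofConv_toConv, LinearMap.comp_id] at h
  apply WithConv.ofConv_injective
  rw [← h]
  ext; simp

end AlgHom

namespace HopfAlgebra

variable {k H : Type*} [CommSemiring k] [Semiring H] [HopfAlgebra k H]

lemma antipode_mul'_lTensor_antipode (hS : Function.Involutive (antipode k (A := H)))
    (X : H ⊗[k] H) :
    antipode k (mul' k H (lTensor H (antipode k) X)) =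
      mul' k H (TensorProduct.comm k H H (rTensor H (antipode k) X)) := by
  induction X using TensorProduct.induction_on with
  | zero => simp
  | tmul a b => simp [antipode_mul_antidistrib, hS b]
  | add X Y hX hY => simp only [map_add, hX, hY]

lemma mul'_comm_rTensor_antipode_comul (hS : Function.Involutive (antipode k (A := H))) (a : H) :
    mul' k H (TensorProduct.comm k H H (rTensor H (antipode k) (comul a))) =
      algebraMap k H (counit a) := by
  rw [← antipode_mul'_lTensor_antipode hS, mul_antipode_lTensor_comul_apply,
    Algebra.algebraMap_eq_smul_one, map_smul, antipode_one]

lemma toConv_comul_eq_includeLeft_convMul_includeRight :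
    toConv (comul (R := k) (A := H)) =
      toConv (Algebra.TensorProduct.includeLeft : H →ₐ[k] H ⊗[k] H).toLinearMap *
        toConv (Algebra.TensorProduct.includeRight : H →ₐ[k] H ⊗[k] H).toLinearMap := by
  apply WithConv.ofConv_injective
  rw [LinearMap.convMul_def, ofConv_toConv, ofConv_toConv, ofConv_toConv]
  have : mul' k (H ⊗[k] H) ∘ₗ map (Algebra.TensorProduct.includeLeft : H →ₐ[k] H ⊗[k] H).toLinearMap
      (Algebra.TensorProduct.includeRight : H →ₐ[k] H ⊗[k] H).toLinearMap = LinearMap.id := by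
    ext; simp
  rw [← comp_assoc, this, id_comp]

/-- `Σ Δ(a₁) (1 ⊗ S a₂) = a ⊗ 1`. -/
lemma toConv_comul_convMul_includeRight_comp_antipode :
    toConv (comul (R := k) (A := H)) *
        toConv ((Algebra.TensorProduct.includeRight : H →ₐ[k] H ⊗[k] H).toLinearMap ∘ₗ
          antipode k) =
      toConv (Algebra.TensorProduct.includeLeft : H →ₐ[k] H ⊗[k] H).toLinearMap := by
  rw [toConv_comul_eq_includeLeft_convMul_includeRight, mul_assoc,
    AlgHom.toConv_convMul_toConv_comp_antipode, mul_one]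

/-- `Σ (S a₁ ⊗ 1) Δ(a₂) = 1 ⊗ a`. -/
lemma toConv_includeLeft_comp_antipode_convMul_comul :
    toConv ((Algebra.TensorProduct.includeLeft : H →ₐ[k] H ⊗[k] H).toLinearMap ∘ₗ
          antipode k) * toConv (comul (R := k) (A := H)) =
      toConv (Algebra.TensorProduct.includeRight : H →ₐ[k] H ⊗[k] H).toLinearMap := by
  rw [toConv_comul_eq_includeLeft_convMul_includeRight, ← mul_assoc,
    AlgHom.toConv_comp_antipode_convMul_toConv, one_mul]

section Cointegral

variable {e : H}

lemma comul_mul_tmul_one_of_mul_eq_counit_smul (he : ∀ x, e * x = counit (R := k) x • e)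
    (a : H) : comul (R := k) e * (a ⊗ₜ 1) = comul e * (1 ⊗ₜ antipode k a) := by
  have hsum := congr(ofConv $(toConv_comul_convMul_includeRight_comp_antipode (k := k)) a)
  have key (X : H ⊗[k] H) :
      comul (R := k) e * mul' k (H ⊗[k] H) (map comul
        ((Algebra.TensorProduct.includeRight : H →ₐ[k] H ⊗[k] H).toLinearMap ∘ₗ antipode k) X) =
      comul e * (1 ⊗ₜ antipode k (TensorProduct.lid k H (rTensor H counit X))) := by
    induction X using TensorProduct.induction_on with
    | zero => simp
    | tmul x y => simp [← mul_assoc, ← Bialgebra.comul_mul, he]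
    | add X Y hX hY => simp only [map_add, mul_add, hX, hY, tmul_add]
  simp only [LinearMap.convMul_apply, AlgHom.toLinearMap_apply,
    Algebra.TensorProduct.includeLeft_apply] at hsum
  rw [← hsum, key, rTensor_counit_comul, TensorProduct.lid_tmul, one_smul]

lemma one_tmul_mul_comul_of_mul_eq_counit_smul (he : ∀ x, x * e = counit (R := k) x • e)
    (a : H) : (1 ⊗ₜ a) * comul (R := k) e = (antipode k a ⊗ₜ 1) * comul e := by
  have hsum := congr(ofConv $(toConv_includeLeft_comp_antipode_convMul_comul (k := k)) a)
  have key (X : H ⊗[k] H) :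
      mul' k (H ⊗[k] H) (map
        ((Algebra.TensorProduct.includeLeft : H →ₐ[k] H ⊗[k] H).toLinearMap ∘ₗ antipode k)
        comul X) * comul (R := k) e =
      (antipode k (TensorProduct.rid k H (lTensor H counit X)) ⊗ₜ 1) * comul e := by
    induction X using TensorProduct.induction_on with
    | zero => simp
    | tmul x y => simp [mul_assoc, ← Bialgebra.comul_mul, he, ← smul_tmul']
    | add X Y hX hY => simp only [map_add, add_mul, hX, hY, add_tmul]
  simp only [LinearMap.convMul_apply, AlgHom.toLinearMap_apply,
    Algebra.TensorProduct.includeRight_apply] at hsum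
  rw [← hsum, key, lTensor_counit_comul, TensorProduct.rid_tmul, one_smul]

end Cointegral

section Integral

variable {μ : Module.Dual k H} {e : H}

lemma lid_rTensor_comul_mul (he : ∀ x, e * x = counit (R := k) x • e)
    (hμe : TensorProduct.lid k H (rTensor H μ (comul e)) = 1) (Y : H ⊗[k] H) :
    TensorProduct.lid k H (rTensor H μ (comul e * Y)) = mul' k H (rTensor H (antipode k) Y) := by
  induction Y using TensorProduct.induction_on with
  | zero => simp
  | tmul y z =>
    rw [← one_mul z, ← mul_one y, ← Algebra.TensorProduct.tmul_mul_tmul, ← mul_assoc,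
      comul_mul_tmul_one_of_mul_eq_counit_smul he, mul_assoc, Algebra.TensorProduct.tmul_mul_tmul,
      one_mul, TensorProduct.lid_rTensor_mul_one_tmul, hμe]
    simp
  | add Y Z hY hZ => simp only [mul_add, map_add, hY, hZ]

lemma rid_lTensor_mul_comul (he : ∀ x, x * e = counit (R := k) x • e)
    (hμe : TensorProduct.rid k H (lTensor H μ (comul e)) = 1) (X : H ⊗[k] H) :
    TensorProduct.rid k H (lTensor H μ (X * comul e)) = mul' k H (lTensor H (antipode k) X) := by
  induction X using TensorProduct.induction_on with
  | zero => simp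
  | tmul y z =>
    rw [← one_mul z, ← mul_one y, ← Algebra.TensorProduct.tmul_mul_tmul, mul_assoc,
      one_tmul_mul_comul_of_mul_eq_counit_smul he, ← mul_assoc, Algebra.TensorProduct.tmul_mul_tmul,
      one_mul, TensorProduct.rid_lTensor_tmul_one_mul, hμe]
    simp
  | add X Y hX hY => simp only [add_mul, map_add, hX, hY]

lemma mul'_comm_lTensor_antipode_eq_of_comm_comul_mul_eq (he₁ : ∀ x, e * x = counit (R := k) x • e)
    (he₂ : ∀ x, x * e = counit (R := k) x • e)
    (hμe₁ : TensorProduct.lid k H (rTensor H μ (comul e)) = 1)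
    (hμe₂ : TensorProduct.rid k H (lTensor H μ (comul e)) = 1)
    {R : H ⊗[k] H} (hR : TensorProduct.comm k H H (comul e) * R = R * comul e) :
    mul' k H (TensorProduct.comm k H H (lTensor H (antipode k) R)) =
      mul' k H (lTensor H (antipode k) R) := by
  have hcomm : ∀ X Y : H ⊗[k] H,
      TensorProduct.comm k H H (X * Y) = TensorProduct.comm k H H X * TensorProduct.comm k H H Y :=
    map_mul (Algebra.TensorProduct.comm k H H)
  calc mul' k H (TensorProduct.comm k H H (lTensor H (antipode k) R))
      = mul' k H (rTensor H (antipode k) (TensorProduct.comm k H H R)) :=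
        congrArg (mul' k H) (map_comm _ _ R).symm
    _ = TensorProduct.lid k H (rTensor H μ (comul e * TensorProduct.comm k H H R)) :=
        (lid_rTensor_comul_mul he₁ hμe₁ _).symm
    _ = TensorProduct.lid k H (rTensor H μ (TensorProduct.comm k H H (R * comul e))) := by
        rw [← hR, hcomm, TensorProduct.comm_comm]
    _ = TensorProduct.rid k H (lTensor H μ (R * comul e)) := by
        rw [show rTensor H μ (TensorProduct.comm k H H (R * comul e)) =
          TensorProduct.comm k H k (lTensor H μ (R * comul e)) from map_comm _ _ _,
          TensorProduct.lid_comm]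
    _ = mul' k H (lTensor H (antipode k) R) := rid_lTensor_mul_comul he₂ hμe₂ R

end Integral

section Quasitriangular

variable {R : H ⊗[k] H}

lemma one_tmul_lid_rTensor_counit_eq_one (hR : IsUnit R)
    (hΔR : rTensor H comul R =
      rTensor H ((TensorProduct.mk k H H).flip 1) R * rTensor H (TensorProduct.mk k H H 1) R) :
    (1 : H) ⊗ₜ[k] TensorProduct.lid k H (rTensor H counit R) = 1 := by
  -- `Φ = ε ⊗ id ⊗ id` turns `(Δ ⊗ id) R = R₁₃ R₂₃` into `R = (1 ⊗ (ε ⊗ id) R) · R`.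
  let Φ : (H ⊗[k] H) ⊗[k] H →ₐ[k] H ⊗[k] H := Algebra.TensorProduct.map
    ((Algebra.TensorProduct.lid k H).toAlgHom.comp
      (Algebra.TensorProduct.map (Bialgebra.counitAlgHom k H) (AlgHom.id k H))) (AlgHom.id k H)
  have hΦ₁ (X) : Φ (rTensor H comul X) = X := LinearMap.congr_fun
    (show Φ.toLinearMap ∘ₗ rTensor H comul = .id by
      ext; simp [Φ, AlgebraTensorModule.map_eq, ← rTensor_def]) X
  have hΦ₂₃ (X) : Φ (rTensor H (TensorProduct.mk k H H 1) X) = X := LinearMap.congr_fun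
    (show Φ.toLinearMap ∘ₗ rTensor H (TensorProduct.mk k H H 1) = .id by ext; simp [Φ]) X
  have hΦ₁₃ (X) : Φ (rTensor H ((TensorProduct.mk k H H).flip 1) X) =
      1 ⊗ₜ TensorProduct.lid k H (rTensor H counit X) := LinearMap.congr_fun
    (show Φ.toLinearMap ∘ₗ rTensor H ((TensorProduct.mk k H H).flip 1) =
        TensorProduct.mk k H H 1 ∘ₗ (TensorProduct.lid k H).toLinearMap ∘ₗ rTensor H counit by
      ext; simp [Φ, TensorProduct.smul_tmul]) X
  have h := congrArg Φ hΔR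
  rw [map_mul, hΦ₁, hΦ₂₃, hΦ₁₃] at h
  exact (hR.mul_eq_right).1 h.symm

lemma rid_lTensor_counit_tmul_one_eq_one (hR : IsUnit R)
    (hΔR : lTensor H comul R =
      lTensor H (TensorProduct.mk k H H 1) R * lTensor H ((TensorProduct.mk k H H).flip 1) R) :
    TensorProduct.rid k H (lTensor H counit R) ⊗ₜ[k] (1 : H) = 1 := by
  let Φ : H ⊗[k] (H ⊗[k] H) →ₐ[k] H ⊗[k] H := Algebra.TensorProduct.map (AlgHom.id k H)
    ((Algebra.TensorProduct.rid k k H).toAlgHom.comp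
      (Algebra.TensorProduct.map (AlgHom.id k H) (Bialgebra.counitAlgHom k H)))
  have hΦ₁ (X) : Φ (lTensor H comul X) = X := LinearMap.congr_fun
    (show Φ.toLinearMap ∘ₗ lTensor H comul = .id by
      ext; simp [Φ, AlgebraTensorModule.map_eq, ← lTensor_def]) X
  have hΦ₁₂ (X) : Φ (lTensor H ((TensorProduct.mk k H H).flip 1) X) = X := LinearMap.congr_fun
    (show Φ.toLinearMap ∘ₗ lTensor H ((TensorProduct.mk k H H).flip 1) = .id by ext; simp [Φ]) X
  have hΦ₁₃ (X) : Φ (lTensor H (TensorProduct.mk k H H 1) X) =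
      TensorProduct.rid k H (lTensor H counit X) ⊗ₜ 1 := LinearMap.congr_fun
    (show Φ.toLinearMap ∘ₗ lTensor H (TensorProduct.mk k H H 1) =
        (TensorProduct.mk k H H).flip 1 ∘ₗ (TensorProduct.rid k H).toLinearMap ∘ₗ
          lTensor H counit by
      ext; simp [Φ, TensorProduct.smul_tmul']) X
  have h := congrArg Φ hΔR
  rw [map_mul, hΦ₁, hΦ₁₂, hΦ₁₃] at h
  exact (hR.mul_eq_right).1 h.symm

lemma rTensor_antipode_mul_self (hR : IsUnit R)
    (hΔR : rTensor H comul R =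
      rTensor H ((TensorProduct.mk k H H).flip 1) R * rTensor H (TensorProduct.mk k H H 1) R) :
    rTensor H (antipode k) R * R = 1 := by
  let Ψ : (H ⊗[k] H) ⊗[k] H →ₗ[k] H ⊗[k] H := rTensor H (mul' k H ∘ₗ rTensor H (antipode k))
  have hΨ₁ (X) : Ψ (rTensor H comul X) = 1 ⊗ₜ TensorProduct.lid k H (rTensor H counit X) :=
    LinearMap.congr_fun (show Ψ ∘ₗ rTensor H comul =
        TensorProduct.mk k H H 1 ∘ₗ (TensorProduct.lid k H).toLinearMap ∘ₗ rTensor H counit by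
      ext; simp [Ψ, Algebra.algebraMap_eq_smul_one, TensorProduct.smul_tmul]) X
  have hΨ₁₃₂₃ (X Y : H ⊗[k] H) : Ψ (rTensor H ((TensorProduct.mk k H H).flip 1) X *
      rTensor H (TensorProduct.mk k H H 1) Y) = rTensor H (antipode k) X * Y := by
    induction X using TensorProduct.induction_on with
    | zero => simp
    | tmul a c =>
      induction Y using TensorProduct.induction_on with
      | zero => simp
      | tmul b d => simp [Ψ]
      | add Y Z hY hZ => simp only [map_add, mul_add, hY, hZ]
    | add X Z hX hZ => simp only [map_add, add_mul, hX, hZ]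
  rw [← hΨ₁₃₂₃, ← hΔR, hΨ₁, one_tmul_lid_rTensor_counit_eq_one hR hΔR]

lemma mul_lTensor_antipode_self (hS : Function.Involutive (antipode k (A := H))) (hR : IsUnit R)
    (hΔR : lTensor H comul R =
      lTensor H (TensorProduct.mk k H H 1) R * lTensor H ((TensorProduct.mk k H H).flip 1) R) :
    R * lTensor H (antipode k) R = 1 := by
  let Ψ : H ⊗[k] (H ⊗[k] H) →ₗ[k] H ⊗[k] H :=
    lTensor H (mul' k H ∘ₗ (TensorProduct.comm k H H).toLinearMap ∘ₗ rTensor H (antipode k))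
  have hΨ₁ (X) : Ψ (lTensor H comul X) = TensorProduct.rid k H (lTensor H counit X) ⊗ₜ 1 :=
    LinearMap.congr_fun (show Ψ ∘ₗ lTensor H comul =
        (TensorProduct.mk k H H).flip 1 ∘ₗ (TensorProduct.rid k H).toLinearMap ∘ₗ
          lTensor H counit by
      ext
      simp [Ψ, mul'_comm_rTensor_antipode_comul hS, Algebra.algebraMap_eq_smul_one,
        TensorProduct.smul_tmul']) X
  have hΨ₁₃₁₂ (X Y : H ⊗[k] H) : Ψ (lTensor H (TensorProduct.mk k H H 1) X *
      lTensor H ((TensorProduct.mk k H H).flip 1) Y) = X * lTensor H (antipode k) Y := by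
    induction X using TensorProduct.induction_on with
    | zero => simp
    | tmul a c =>
      induction Y using TensorProduct.induction_on with
      | zero => simp
      | tmul b d => simp [Ψ]
      | add Y Z hY hZ => simp only [map_add, mul_add, hY, hZ]
    | add X Z hX hZ => simp only [map_add, add_mul, hX, hZ]
  rw [← hΨ₁₃₁₂, ← hΔR, hΨ₁, rid_lTensor_counit_tmul_one_eq_one hR hΔR]

lemma rTensor_antipode_eq_lTensor_antipode (hS : Function.Involutive (antipode k (A := H)))
    (hR : IsUnit R)
    (hΔR₁ : rTensor H comul R =
      rTensor H ((TensorProduct.mk k H H).flip 1) R * rTensor H (TensorProduct.mk k H H 1) R)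
    (hΔR₂ : lTensor H comul R =
      lTensor H (TensorProduct.mk k H H 1) R * lTensor H ((TensorProduct.mk k H H).flip 1) R) :
    rTensor H (antipode k) R = lTensor H (antipode k) R :=
  left_inv_eq_right_inv (rTensor_antipode_mul_self hR hΔR₁) (mul_lTensor_antipode_self hS hR hΔR₂)

end Quasitriangular

end HopfAlgebra

theorem drinfeld_element_antipode_fixed_general
    {k H : Type*} [Field k] [Ring H] [HopfAlgebra k H]
    -- involutory
    (hinv : ∀ x : H, antipode (R := k) (antipode (R := k) x) = x)
    -- quasitriangular structure R
    (R : H ⊗[k] H)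
    (hRunit : IsUnit R)
    (hR1 : ∀ x : H,
      (TensorProduct.comm k H H (comul (R := k) x)) * R = R * comul (R := k) x)
    (hR2 : LinearMap.rTensor H (Coalgebra.comul (R := k)) R
      = (LinearMap.rTensor H ((TensorProduct.mk k H H).flip 1) R)
        * (LinearMap.rTensor H (TensorProduct.mk k H H 1) R))
    (hR3 : LinearMap.lTensor H (Coalgebra.comul (R := k)) R
      = (LinearMap.lTensor H (TensorProduct.mk k H H 1) R)
        * (LinearMap.lTensor H ((TensorProduct.mk k H H).flip 1) R))
    -- two-sided integral and cointegral
    (μ : Module.Dual k H) (e : H)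
    (hμ : ∀ x : H,
      TensorProduct.rid k H (LinearMap.lTensor H μ (comul (R := k) x)) = μ x • (1 : H) ∧
      TensorProduct.lid k H (LinearMap.rTensor H μ (comul (R := k) x)) = μ x • (1 : H))
    (he : ∀ x : H, x * e = counit (R := k) x • e ∧ e * x = counit (R := k) x • e)
    (hμe : μ e = 1)
    -- Drinfeld element u = Σᵢ S(tᵢ)·sᵢ
    (u : H)
    (hu : u = LinearMap.mul' k H
      (TensorProduct.comm k H H (LinearMap.lTensor H (antipode (R := k)) R))) :
    antipode (R := k) u = u := by
  have hu' : u = mul' k H (lTensor H (antipode k) R) :=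
    hu.trans <| mul'_comm_lTensor_antipode_eq_of_comm_comul_mul_eq (fun x => (he x).2)
      (fun x => (he x).1) (by rw [(hμ e).2, hμe, one_smul]) (by rw [(hμ e).1, hμe, one_smul])
      (hR1 e)
  calc antipode k u
      = mul' k H (TensorProduct.comm k H H (rTensor H (antipode k) R)) := by
        rw [hu', antipode_mul'_lTensor_antipode hinv]
    _ = u := by rw [rTensor_antipode_eq_lTensor_antipode hinv hRunit hR2 hR3, hu]

/-- Let `(H,R)` be a finite-dimensional involutory quasitriangular Hopf algebra
over a field `k` which admits a two-sided integral `μ ∈ H*` and a two-sided cointegral `e ∈ H`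
with `μ(e) = 1`.  Then the Drinfeld element `u = Σᵢ S(tᵢ)·sᵢ` satisfies `S(u) = u`. -/
theorem drinfeld_element_antipode_fixed
    {k H : Type*} [Field k] [Ring H] [HopfAlgebra k H] [FiniteDimensional k H]
    -- involutory
    (hinv : ∀ x : H, antipode (R := k) (antipode (R := k) x) = x)
    -- quasitriangular structure R
    (R : H ⊗[k] H)
    (hRunit : IsUnit R)
    (hR1 : ∀ x : H,
      (TensorProduct.comm k H H (comul (R := k) x)) * R = R * comul (R := k) x)
    (hR2 : LinearMap.rTensor H (Coalgebra.comul (R := k)) R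
      = (LinearMap.rTensor H ((TensorProduct.mk k H H).flip 1) R)
        * (LinearMap.rTensor H (TensorProduct.mk k H H 1) R))
    (hR3 : LinearMap.lTensor H (Coalgebra.comul (R := k)) R
      = (LinearMap.lTensor H (TensorProduct.mk k H H 1) R)
        * (LinearMap.lTensor H ((TensorProduct.mk k H H).flip 1) R))
    -- two-sided integral and cointegral
    (μ : Module.Dual k H) (e : H)
    (hμ : ∀ x : H,
      TensorProduct.rid k H (LinearMap.lTensor H μ (comul (R := k) x)) = μ x • (1 : H) ∧
      TensorProduct.lid k H (LinearMap.rTensor H μ (comul (R := k) x)) = μ x • (1 : H))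
    (he : ∀ x : H, x * e = counit (R := k) x • e ∧ e * x = counit (R := k) x • e)
    (hμe : μ e = 1)
    -- Drinfeld element u = Σᵢ S(tᵢ)·sᵢ
    (u : H)
    (hu : u = LinearMap.mul' k H
      (TensorProduct.comm k H H (LinearMap.lTensor H (antipode (R := k)) R))) :
    antipode (R := k) u = u :=
  drinfeld_element_antipode_fixed_general hinv R hRunit hR1 hR2 hR3 μ e hμ he hμe u hu
end

section
/- Let H be a finite-dimensional involutory Hopf algebra over a field k with a two-sided integral μ ∈ H* and a two-sided cointegral e ∈ H such that μ(e) = 1. Then μ is trace-like: μ(x·y) = μ(y·x) for all x, y ∈ H. -/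
open TensorProduct Coalgebra HopfAlgebra

section Aux

variable {k H : Type*} [Field k] [Ring H] [HopfAlgebra k H]

private lemma tri_assoc {M : Type*} [AddCommMonoid M] [Module k M] (f : H →ₗ[k] H →ₗ[k] H →ₗ[k] M)
    {a : H} (r : Coalgebra.Repr k a (H × H))
    (a₁ : ∀ i, Coalgebra.Repr k (r.left i) (H × H)) (a₂ : ∀ i, Coalgebra.Repr k (r.right i) (H × H)) :
    ∑ i ∈ r.index, ∑ j ∈ (a₁ i).index,
      f ((a₁ i).left j) ((a₁ i).right j) (r.right i)
    = ∑ i ∈ r.index, ∑ j ∈ (a₂ i).index,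
      f (r.left i) ((a₂ i).left j) ((a₂ i).right j) := by
  have h := Coalgebra.sum_tmul_tmul_eq r a₁ a₂
  have h2 := congrArg
    (TensorProduct.lift ((TensorProduct.lift.equiv (RingHom.id k) H H M).toLinearMap ∘ₗ f)) h
  simpa [map_sum, TensorProduct.lift.tmul] using h2

private lemma counit_right_expand (y : H) (ry : Coalgebra.Repr k y (H × H)) :
    ∑ j ∈ ry.index, (counit (R := k) (ry.right j)) • ry.left j = y := by
  have h := Coalgebra.sum_tmul_counit_eq (R := k) ry
  calc ∑ j ∈ ry.index, (counit (R := k) (ry.right j)) • ry.left j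
      = TensorProduct.rid k H (∑ j ∈ ry.index, ry.left j ⊗ₜ[k] counit (R := k) (ry.right j)) := by
        rw [map_sum]; simp
    _ = y := by rw [h]; simp

private lemma counit_left_expand (y : H) (ry : Coalgebra.Repr k y (H × H)) :
    ∑ j ∈ ry.index, (counit (R := k) (ry.left j)) • ry.right j = y := by
  have h := Coalgebra.sum_counit_tmul_eq (R := k) ry
  calc ∑ j ∈ ry.index, (counit (R := k) (ry.left j)) • ry.right j
      = TensorProduct.lid k H (∑ j ∈ ry.index, counit (R := k) (ry.left j) ⊗ₜ[k] ry.right j) := by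
        rw [map_sum]; simp
    _ = y := by rw [h]; simp

private lemma int_prod_lid (μ : Module.Dual k H)
    (hμ : ∀ w : H, TensorProduct.lid k H (LinearMap.rTensor H μ (comul (R := k) w)) = μ w • (1 : H))
    (a b : H) (ra : Coalgebra.Repr k a (H × H)) (rb : Coalgebra.Repr k b (H × H)) :
    ∑ i ∈ ra.index, ∑ j ∈ rb.index,
      μ (ra.left i * rb.left j) • (ra.right i * rb.right j) = μ (a * b) • (1 : H) := by
  have hc : comul (R := k) (a * b) =
      ∑ i ∈ ra.index, ∑ j ∈ rb.index,
        (ra.left i * rb.left j) ⊗ₜ[k] (ra.right i * rb.right j) := by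
    rw [Bialgebra.comul_mul, ← ra.eq, ← rb.eq, Finset.sum_mul_sum]
    simp [Algebra.TensorProduct.tmul_mul_tmul]
  have := hμ (a * b)
  rw [hc] at this
  simpa [map_sum] using this

private lemma int_prod_rid (μ : Module.Dual k H)
    (hμ : ∀ w : H, TensorProduct.rid k H (LinearMap.lTensor H μ (comul (R := k) w)) = μ w • (1 : H))
    (a b : H) (ra : Coalgebra.Repr k a (H × H)) (rb : Coalgebra.Repr k b (H × H)) :
    ∑ i ∈ ra.index, ∑ j ∈ rb.index,
      μ (ra.right i * rb.right j) • (ra.left i * rb.left j) = μ (a * b) • (1 : H) := by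
  have hc : comul (R := k) (a * b) =
      ∑ i ∈ ra.index, ∑ j ∈ rb.index,
        (ra.left i * rb.left j) ⊗ₜ[k] (ra.right i * rb.right j) := by
    rw [Bialgebra.comul_mul, ← ra.eq, ← rb.eq, Finset.sum_mul_sum]
    simp [Algebra.TensorProduct.tmul_mul_tmul]
  have := hμ (a * b)
  rw [hc] at this
  simpa [map_sum] using this

/-- Identity (A): `∑ μ(x₍₁₎ y) x₍₂₎ = ∑ μ(x y₍₁₎) S(y₍₂₎)`. -/
private lemma lemA (μ : Module.Dual k H)
    (hμ : ∀ w : H, TensorProduct.lid k H (LinearMap.rTensor H μ (comul (R := k) w)) = μ w • (1 : H))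
    (x y : H) (rx : Coalgebra.Repr k x (H × H)) (ry : Coalgebra.Repr k y (H × H)) :
    ∑ i ∈ rx.index, μ (rx.left i * y) • rx.right i
    = ∑ j ∈ ry.index, μ (x * ry.left j) • antipode (R := k) (ry.right j) := by
  classical
  set r1 : ∀ j, Coalgebra.Repr k (ry.left j) (H × H) := fun j => ℛ k (ry.left j) with hr1
  set r2 : ∀ j, Coalgebra.Repr k (ry.right j) (H × H) := fun j => ℛ k (ry.right j) with hr2
  set f : H →ₗ[k] H →ₗ[k] H →ₗ[k] H :=
    ∑ i ∈ rx.index, LinearMap.smulRight (μ ∘ₗ LinearMap.mulLeft k (rx.left i))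
      (((LinearMap.mul k H) ∘ₗ LinearMap.mulLeft k (rx.right i)).compl₂ (antipode (R := k)))
    with hfdef
  have hf : ∀ a b c : H, f a b c
      = ∑ i ∈ rx.index, μ (rx.left i * a) • ((rx.right i * b) * antipode (R := k) c) := by
    intro a b c
    simp [hfdef, LinearMap.sum_apply, LinearMap.smulRight_apply, LinearMap.smul_apply,
      LinearMap.compl₂_apply, LinearMap.comp_apply, LinearMap.mul_apply', LinearMap.mulLeft_apply]
  have key := tri_assoc f ry r1 r2
  have hA2 : ∑ j ∈ ry.index, ∑ l ∈ (r2 j).index,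
      f (ry.left j) ((r2 j).left l) ((r2 j).right l)
      = ∑ i ∈ rx.index, μ (rx.left i * y) • rx.right i := by
    have step1 : ∀ j, ∑ l ∈ (r2 j).index, f (ry.left j) ((r2 j).left l) ((r2 j).right l)
        = ∑ i ∈ rx.index, (counit (R := k) (ry.right j)) • μ (rx.left i * ry.left j) • rx.right i := by
      intro j
      simp only [hf]
      rw [Finset.sum_comm]
      refine Finset.sum_congr rfl fun i _ => ?_
      calc ∑ l ∈ (r2 j).index,
            μ (rx.left i * ry.left j) • ((rx.right i * (r2 j).left l) * antipode (R := k) ((r2 j).right l))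
          = μ (rx.left i * ry.left j) •
              (rx.right i * ∑ l ∈ (r2 j).index, (r2 j).left l * antipode (R := k) ((r2 j).right l)) := by
            rw [Finset.mul_sum, Finset.smul_sum]
            exact Finset.sum_congr rfl fun l _ => by rw [mul_assoc]
        _ = μ (rx.left i * ry.left j) • (rx.right i * ((counit (R := k) (ry.right j)) • (1 : H))) := by
            rw [HopfAlgebra.sum_mul_antipode_eq_smul]
        _ = (counit (R := k) (ry.right j)) • μ (rx.left i * ry.left j) • rx.right i := by
            rw [mul_smul_comm, mul_one, smul_comm]
    calc ∑ j ∈ ry.index, ∑ l ∈ (r2 j).index, f (ry.left j) ((r2 j).left l) ((r2 j).right l)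
        = ∑ j ∈ ry.index, ∑ i ∈ rx.index,
            (counit (R := k) (ry.right j)) • μ (rx.left i * ry.left j) • rx.right i :=
          Finset.sum_congr rfl fun j _ => step1 j
      _ = ∑ i ∈ rx.index, ∑ j ∈ ry.index,
            (counit (R := k) (ry.right j) * μ (rx.left i * ry.left j)) • rx.right i := by
          rw [Finset.sum_comm]
          exact Finset.sum_congr rfl fun i _ => Finset.sum_congr rfl fun j _ => by rw [smul_smul]
      _ = ∑ i ∈ rx.index, μ (rx.left i * y) • rx.right i := by
          refine Finset.sum_congr rfl fun i _ => ?_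
          rw [← Finset.sum_smul]
          congr 1
          have : ∑ j ∈ ry.index, counit (R := k) (ry.right j) * μ (rx.left i * ry.left j)
              = μ (rx.left i * ∑ j ∈ ry.index, (counit (R := k) (ry.right j)) • ry.left j) := by
            rw [Finset.mul_sum, map_sum]
            exact Finset.sum_congr rfl fun j _ => by
              rw [mul_smul_comm, map_smul, smul_eq_mul]
          rw [this, counit_right_expand y ry]
  have hA1 : ∑ j ∈ ry.index, ∑ m ∈ (r1 j).index,
      f ((r1 j).left m) ((r1 j).right m) (ry.right j)
      = ∑ j ∈ ry.index, μ (x * ry.left j) • antipode (R := k) (ry.right j) := by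
    refine Finset.sum_congr rfl fun j _ => ?_
    calc ∑ m ∈ (r1 j).index, f ((r1 j).left m) ((r1 j).right m) (ry.right j)
        = (∑ i ∈ rx.index, ∑ m ∈ (r1 j).index,
            μ (rx.left i * (r1 j).left m) • (rx.right i * (r1 j).right m))
            * antipode (R := k) (ry.right j) := by
          simp only [hf]
          rw [Finset.sum_mul, Finset.sum_comm]
          refine Finset.sum_congr rfl fun i _ => ?_
          rw [Finset.sum_mul]
          exact Finset.sum_congr rfl fun m _ => by rw [smul_mul_assoc]
      _ = μ (x * ry.left j) • antipode (R := k) (ry.right j) := by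
          rw [int_prod_lid μ hμ x (ry.left j) rx (r1 j), smul_mul_assoc, one_mul]
  rw [← hA2, ← key]
  exact hA1

/-- Identity (B): `∑ μ(x y₍₂₎) y₍₁₎ = ∑ μ(x₍₂₎ y) S(x₍₁₎)`. -/
private lemma lemB (μ : Module.Dual k H)
    (hμ : ∀ w : H, TensorProduct.rid k H (LinearMap.lTensor H μ (comul (R := k) w)) = μ w • (1 : H))
    (x y : H) (rx : Coalgebra.Repr k x (H × H)) (ry : Coalgebra.Repr k y (H × H)) :
    ∑ j ∈ ry.index, μ (x * ry.right j) • ry.left j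
    = ∑ i ∈ rx.index, μ (rx.right i * y) • antipode (R := k) (rx.left i) := by
  classical
  set r1 : ∀ i, Coalgebra.Repr k (rx.left i) (H × H) := fun i => ℛ k (rx.left i) with hr1
  set r2 : ∀ i, Coalgebra.Repr k (rx.right i) (H × H) := fun i => ℛ k (rx.right i) with hr2
  set f : H →ₗ[k] H →ₗ[k] H →ₗ[k] H :=
    ∑ j ∈ ry.index,
      ((((LinearMap.mul k H) ∘ₗ (antipode (R := k))).compl₂
        (LinearMap.mulRight k (ry.left j))).compr₂
        (LinearMap.smulRightₗ (μ ∘ₗ LinearMap.mulRight k (ry.right j))))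
    with hfdef
  have hf : ∀ a b c : H, f a b c
      = ∑ j ∈ ry.index, μ (c * ry.right j) • (antipode (R := k) a * (b * ry.left j)) := by
    intro a b c
    simp [hfdef, LinearMap.sum_apply, LinearMap.compr₂_apply, LinearMap.smulRightₗ_apply,
      LinearMap.smulRight_apply, LinearMap.compl₂_apply, LinearMap.comp_apply,
      LinearMap.mul_apply', LinearMap.mulRight_apply]
  have key := tri_assoc f rx r1 r2
  have hA1 : ∑ i ∈ rx.index, ∑ m ∈ (r1 i).index,
      f ((r1 i).left m) ((r1 i).right m) (rx.right i)
      = ∑ j ∈ ry.index, μ (x * ry.right j) • ry.left j := by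
    have step1 : ∀ i, ∑ m ∈ (r1 i).index, f ((r1 i).left m) ((r1 i).right m) (rx.right i)
        = ∑ j ∈ ry.index,
            (counit (R := k) (rx.left i)) • μ (rx.right i * ry.right j) • ry.left j := by
      intro i
      simp only [hf]
      rw [Finset.sum_comm]
      refine Finset.sum_congr rfl fun j _ => ?_
      calc ∑ m ∈ (r1 i).index, μ (rx.right i * ry.right j) •
            (antipode (R := k) ((r1 i).left m) * ((r1 i).right m * ry.left j))
          = μ (rx.right i * ry.right j) •
              ((∑ m ∈ (r1 i).index, antipode (R := k) ((r1 i).left m) * (r1 i).right m)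
                * ry.left j) := by
            rw [Finset.sum_mul, Finset.smul_sum]
            exact Finset.sum_congr rfl fun m _ => by rw [mul_assoc]
        _ = μ (rx.right i * ry.right j) • (((counit (R := k) (rx.left i)) • (1 : H)) * ry.left j) := by
            rw [HopfAlgebra.sum_antipode_mul_eq_smul]
        _ = (counit (R := k) (rx.left i)) • μ (rx.right i * ry.right j) • ry.left j := by
            rw [smul_mul_assoc, one_mul, smul_comm]
    calc ∑ i ∈ rx.index, ∑ m ∈ (r1 i).index, f ((r1 i).left m) ((r1 i).right m) (rx.right i)
        = ∑ i ∈ rx.index, ∑ j ∈ ry.index,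
            (counit (R := k) (rx.left i)) • μ (rx.right i * ry.right j) • ry.left j :=
          Finset.sum_congr rfl fun i _ => step1 i
      _ = ∑ j ∈ ry.index, ∑ i ∈ rx.index,
            (counit (R := k) (rx.left i) * μ (rx.right i * ry.right j)) • ry.left j := by
          rw [Finset.sum_comm]
          exact Finset.sum_congr rfl fun j _ => Finset.sum_congr rfl fun i _ => by rw [smul_smul]
      _ = ∑ j ∈ ry.index, μ (x * ry.right j) • ry.left j := by
          refine Finset.sum_congr rfl fun j _ => ?_
          rw [← Finset.sum_smul]
          congr 1
          have : ∑ i ∈ rx.index, counit (R := k) (rx.left i) * μ (rx.right i * ry.right j)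
              = μ ((∑ i ∈ rx.index, (counit (R := k) (rx.left i)) • rx.right i) * ry.right j) := by
            rw [Finset.sum_mul, map_sum]
            exact Finset.sum_congr rfl fun i _ => by
              rw [smul_mul_assoc, map_smul, smul_eq_mul]
          rw [this, counit_left_expand x rx]
  have hA2 : ∑ i ∈ rx.index, ∑ l ∈ (r2 i).index,
      f (rx.left i) ((r2 i).left l) ((r2 i).right l)
      = ∑ i ∈ rx.index, μ (rx.right i * y) • antipode (R := k) (rx.left i) := by
    refine Finset.sum_congr rfl fun i _ => ?_
    calc ∑ l ∈ (r2 i).index, f (rx.left i) ((r2 i).left l) ((r2 i).right l)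
        = antipode (R := k) (rx.left i) *
            (∑ l ∈ (r2 i).index, ∑ j ∈ ry.index,
              μ ((r2 i).right l * ry.right j) • ((r2 i).left l * ry.left j)) := by
          simp only [hf]
          rw [Finset.mul_sum]
          refine Finset.sum_congr rfl fun l _ => ?_
          rw [Finset.mul_sum]
          exact Finset.sum_congr rfl fun j _ => (mul_smul_comm _ _ _).symm
      _ = μ (rx.right i * y) • antipode (R := k) (rx.left i) := by
          rw [int_prod_rid μ hμ (rx.right i) y (r2 i) ry, mul_smul_comm, mul_one]
  rw [← hA1, key]
  exact hA2

end Aux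

/-- For a finite-dimensional involutory Hopf algebra `H` over a field `k` with a
two-sided integral `μ ∈ H*` and a two-sided cointegral `e ∈ H` such that `μ(e) = 1`, the
integral `μ` is trace-like: `μ(x·y) = μ(y·x)` for all `x, y ∈ H`. -/
theorem integral_trace_like
    {k H : Type*} [Field k] [Ring H] [HopfAlgebra k H] [FiniteDimensional k H]
    (hinv : ∀ x : H, antipode (R := k) (antipode (R := k) x) = x)
    (μ : Module.Dual k H) (e : H)
    (hμ : ∀ x : H,
      TensorProduct.rid k H (LinearMap.lTensor H μ (comul (R := k) x)) = μ x • (1 : H) ∧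
      TensorProduct.lid k H (LinearMap.rTensor H μ (comul (R := k) x)) = μ x • (1 : H))
    (he : ∀ x : H, x * e = counit (R := k) x • e ∧ e * x = counit (R := k) x • e)
    (hμe : μ e = 1) :
    ∀ x y : H, μ (x * y) = μ (y * x) := by
  classical
  have hμ1 : ∀ w : H,
      TensorProduct.rid k H (LinearMap.lTensor H μ (comul (R := k) w)) = μ w • (1 : H) :=
    fun w => (hμ w).1
  have hμ2 : ∀ w : H,
      TensorProduct.lid k H (LinearMap.rTensor H μ (comul (R := k) w)) = μ w • (1 : H) :=
    fun w => (hμ w).2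
  set re := ℛ k e with hre
  have hμeL : ∀ w : H, μ (e * w) = counit (R := k) w := by
    intro w; rw [(he w).2, map_smul, smul_eq_mul, hμe, mul_one]
  have hμeR : ∀ w : H, μ (w * e) = counit (R := k) w := by
    intro w; rw [(he w).1, map_smul, smul_eq_mul, hμe, mul_one]
  -- E1 : S y = ∑ μ(e₍₁₎ y) e₍₂₎
  have E1 : ∀ y : H, antipode (R := k) y
      = ∑ i ∈ re.index, μ (re.left i * y) • re.right i := by
    intro y
    have h := lemA μ hμ2 e y re (ℛ k y)
    have h2 : ∑ j ∈ (ℛ k y).index,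
        μ (e * (ℛ k y).left j) • antipode (R := k) ((ℛ k y).right j)
        = antipode (R := k) y := by
      have hco : ∀ j ∈ (ℛ k y).index,
          μ (e * (ℛ k y).left j) • antipode (R := k) ((ℛ k y).right j)
          = counit (R := k) ((ℛ k y).left j) • antipode (R := k) ((ℛ k y).right j) :=
        fun j _ => by rw [hμeL]
      rw [Finset.sum_congr rfl hco]
      calc ∑ j ∈ (ℛ k y).index,
            counit (R := k) ((ℛ k y).left j) • antipode (R := k) ((ℛ k y).right j)
          = antipode (R := k)
              (∑ j ∈ (ℛ k y).index, counit (R := k) ((ℛ k y).left j) • (ℛ k y).right j) := by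
            rw [map_sum]
            exact Finset.sum_congr rfl fun j _ => (map_smul _ _ _).symm
        _ = antipode (R := k) y := by rw [counit_left_expand y (ℛ k y)]
    exact (h.trans h2).symm
  -- E4 : S y = ∑ μ(y e₍₂₎) e₍₁₎
  have E4 : ∀ y : H, antipode (R := k) y
      = ∑ i ∈ re.index, μ (y * re.right i) • re.left i := by
    intro y
    have h := lemB μ hμ1 y e (ℛ k y) re
    have h2 : ∑ i ∈ (ℛ k y).index,
        μ ((ℛ k y).right i * e) • antipode (R := k) ((ℛ k y).left i)
        = antipode (R := k) y := by
      have hco : ∀ i ∈ (ℛ k y).index,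
          μ ((ℛ k y).right i * e) • antipode (R := k) ((ℛ k y).left i)
          = counit (R := k) ((ℛ k y).right i) • antipode (R := k) ((ℛ k y).left i) :=
        fun i _ => by rw [hμeR]
      rw [Finset.sum_congr rfl hco]
      calc ∑ i ∈ (ℛ k y).index,
            counit (R := k) ((ℛ k y).right i) • antipode (R := k) ((ℛ k y).left i)
          = antipode (R := k)
              (∑ i ∈ (ℛ k y).index, counit (R := k) ((ℛ k y).right i) • (ℛ k y).left i) := by
            rw [map_sum]
            exact Finset.sum_congr rfl fun i _ => (map_smul _ _ _).symm
        _ = antipode (R := k) y := by rw [counit_right_expand y (ℛ k y)]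
    exact (h.trans h2).symm
  -- E2 : S y = ∑ μ(e₍₂₎ y) e₍₁₎ (uses involutivity)
  have E2 : ∀ y : H, antipode (R := k) y
      = ∑ i ∈ re.index, μ (re.right i * y) • re.left i := by
    intro y
    have h := lemB μ hμ1 e y re (ℛ k y)
    have h2 : ∑ j ∈ (ℛ k y).index, μ (e * (ℛ k y).right j) • (ℛ k y).left j = y := by
      have hco : ∀ j ∈ (ℛ k y).index,
          μ (e * (ℛ k y).right j) • (ℛ k y).left j
          = counit (R := k) ((ℛ k y).right j) • (ℛ k y).left j :=
        fun j _ => by rw [hμeL]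
      rw [Finset.sum_congr rfl hco, counit_right_expand y (ℛ k y)]
    have h3 : y = ∑ i ∈ re.index, μ (re.right i * y) • antipode (R := k) (re.left i) :=
      h2.symm.trans h
    have h4 := congrArg (antipode (R := k)) h3
    rw [map_sum] at h4
    simp only [map_smul, hinv] at h4
    exact h4
  -- symmetry identities
  have asym : ∀ y z : H, μ (antipode (R := k) y * z) = μ (antipode (R := k) z * y) := by
    intro y z
    rw [E2 y, E1 z, Finset.sum_mul, Finset.sum_mul, map_sum, map_sum]
    refine Finset.sum_congr rfl fun i _ => ?_
    rw [smul_mul_assoc, smul_mul_assoc, map_smul, map_smul, smul_eq_mul, smul_eq_mul, mul_comm]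
  have bsym : ∀ y z : H, μ (z * antipode (R := k) y) = μ (antipode (R := k) z * y) := by
    intro y z
    rw [E1 y, E4 z, Finset.mul_sum, Finset.sum_mul, map_sum, map_sum]
    refine Finset.sum_congr rfl fun i _ => ?_
    rw [mul_smul_comm, smul_mul_assoc, map_smul, map_smul, smul_eq_mul, smul_eq_mul, mul_comm]
  intro x y
  have h := (asym (antipode (R := k) x) y).trans (bsym (antipode (R := k) x) y).symm
  rw [hinv] at h
  exact h
end

section
/- Let H be a finite-dimensional involutory Hopf algebra over a field k with a two-sided integral μ ∈ H* and a two-sided cointegral e ∈ H such that μ(e) = 1. Then e is cocommutative: Σ₍ₑ₎ e₍₁₎ ⊗ e₍₂₎ = Σ₍ₑ₎ e₍₂₎ ⊗ e₍₁₎ in H ⊗ H. -/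
open TensorProduct Coalgebra HopfAlgebra LinearMap

section AuxiliaryLemmas

variable {k H : Type*} [CommSemiring k] [Semiring H] [Bialgebra k H]

/-- The product of two comultiplication representations represents the product. -/
noncomputable def mulRepr {ι κ : Type*} {x y : H} (ρ : Coalgebra.Repr k x ι)
    (σ : Coalgebra.Repr k y κ) :
    Coalgebra.Repr k (x * y) (ι × κ) where
  index := ρ.index ×ˢ σ.index
  left p := ρ.left p.1 * σ.left p.2
  right p := ρ.right p.1 * σ.right p.2
  eq := by
    show _ = CoalgebraStruct.comul (x * y)
    rw [show CoalgebraStruct.comul (R := k) (x*y) = comul (R := k) x * comul (R := k) y from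
      Bialgebra.comul_mul x y, ← ρ.eq, ← σ.eq, Finset.sum_mul_sum, Finset.sum_product]
    simp [Algebra.TensorProduct.tmul_mul_tmul]

lemma counit_left {ι : Type*} (x : H) (ρ : Coalgebra.Repr k x ι) :
    ∑ i ∈ ρ.index, counit (R := k) (ρ.left i) • ρ.right i = x := by
  have h := congrArg (TensorProduct.lid k H) (Coalgebra.sum_counit_tmul_eq ρ)
  simp only [map_sum, TensorProduct.lid_tmul, one_smul] at h
  exact h

lemma counit_right {ι : Type*} (x : H) (ρ : Coalgebra.Repr k x ι) :
    ∑ i ∈ ρ.index, counit (R := k) (ρ.right i) • ρ.left i = x := by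
  have h := congrArg (TensorProduct.rid k H) (Coalgebra.sum_tmul_counit_eq ρ)
  simp only [map_sum, TensorProduct.rid_tmul, one_smul] at h
  exact h

lemma int_right' {ι : Type*} {μ : Module.Dual k H}
    (hμ : ∀ x : H, TensorProduct.rid k H (LinearMap.lTensor H μ (comul (R := k) x)) = μ x • (1 : H))
    (x : H) (ρ : Coalgebra.Repr k x ι) :
    ∑ i ∈ ρ.index, μ (ρ.right i) • ρ.left i = μ x • (1 : H) := by
  have h := hμ x
  rw [← ρ.eq] at h
  simpa [map_sum] using h

lemma int_left' {ι : Type*} {μ : Module.Dual k H}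
    (hμ : ∀ x : H, TensorProduct.lid k H (LinearMap.rTensor H μ (comul (R := k) x)) = μ x • (1 : H))
    (x : H) (ρ : Coalgebra.Repr k x ι) :
    ∑ i ∈ ρ.index, μ (ρ.left i) • ρ.right i = μ x • (1 : H) := by
  have h := hμ x
  rw [← ρ.eq] at h
  simpa [map_sum] using h

end AuxiliaryLemmas

/-- The key identity `∑ μ(e₍₂₎ x) • S(e₍₁₎) = x`, valid for any representation of `comul e`. -/
lemma star_lemma {ι : Type*} {k H : Type*} [CommSemiring k] [Semiring H] [HopfAlgebra k H]
    (μ : Module.Dual k H) (e : H)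
    (hμ1 : ∀ y : H,
      TensorProduct.rid k H (LinearMap.lTensor H μ (comul (R := k) y)) = μ y • (1 : H))
    (hμe' : ∀ y : H, μ (e * y) = counit (R := k) y)
    (x : H) (r : Coalgebra.Repr k e ι) :
    ∑ i ∈ r.index, μ (r.right i * x) • antipode (R := k) (r.left i) = x := by
  classical
  set S : H →ₗ[k] H := antipode (R := k) with hSdef
  set ρ := ℛ k x with hρ
  set rL : (i : r.ι) → Coalgebra.Repr k (r.left i) (H × H) := fun i => ℛ k (r.left i) with hrL
  set rR : (i : r.ι) → Coalgebra.Repr k (r.right i) (H × H) := fun i => ℛ k (r.right i) with hrR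
  have hco := Coalgebra.sum_tmul_tmul_eq r rL rR
  have main : ∀ c d : H,
      ∑ i ∈ r.index, ∑ n ∈ (rL i).index,
        μ (r.right i * d) • (S ((rL i).left n) * ((rL i).right n * c))
      = ∑ i ∈ r.index, ∑ m ∈ (rR i).index,
        μ ((rR i).right m * d) • (S (r.left i) * ((rR i).left m * c)) := by
    intro c d
    set F : H ⊗[k] (H ⊗[k] H) →ₗ[k] H :=
      (LinearMap.mul' k H) ∘ₗ
      (LinearMap.rTensor H S) ∘ₗ
      (LinearMap.lTensor H ((TensorProduct.rid k H).toLinearMap ∘ₗ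
        (LinearMap.lTensor H (μ ∘ₗ LinearMap.mulRight k d)) ∘ₗ
        (LinearMap.rTensor H (LinearMap.mulRight k c)))) with hF
    have h := congrArg (⇑F) hco
    simp only [hF, map_sum, coe_comp, Function.comp_apply, lTensor_tmul, LinearEquiv.coe_coe,
      rTensor_tmul, mulRight_apply, TensorProduct.rid_tmul, mul'_apply, map_smul,
      smul_mul_assoc, mul_smul_comm] at h
    exact h
  have main2 : ∑ j ∈ ρ.index, ∑ i ∈ r.index, ∑ n ∈ (rL i).index,
        μ (r.right i * ρ.right j) • (S ((rL i).left n) * ((rL i).right n * ρ.left j))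
      = ∑ j ∈ ρ.index, ∑ i ∈ r.index, ∑ m ∈ (rR i).index,
        μ ((rR i).right m * ρ.right j) • (S (r.left i) * ((rR i).left m * ρ.left j)) :=
    Finset.sum_congr rfl fun j _ => main (ρ.left j) (ρ.right j)
  have lhs_eval : ∑ j ∈ ρ.index, ∑ i ∈ r.index, ∑ n ∈ (rL i).index,
        μ (r.right i * ρ.right j) • (S ((rL i).left n) * ((rL i).right n * ρ.left j)) = x := by
    have step1 : ∀ j ∈ ρ.index, ∀ i ∈ r.index,
        ∑ n ∈ (rL i).index,
          μ (r.right i * ρ.right j) • (S ((rL i).left n) * ((rL i).right n * ρ.left j))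
        = (counit (R := k) (r.left i) * μ (r.right i * ρ.right j)) • ρ.left j := by
      intro j _ i _
      have hanti := HopfAlgebra.sum_antipode_mul_eq_smul (rL i)
      calc ∑ n ∈ (rL i).index,
            μ (r.right i * ρ.right j) • (S ((rL i).left n) * ((rL i).right n * ρ.left j))
          = μ (r.right i * ρ.right j) •
              ((∑ n ∈ (rL i).index, S ((rL i).left n) * (rL i).right n) * ρ.left j) := by
            rw [Finset.sum_mul, Finset.smul_sum]
            exact Finset.sum_congr rfl fun n _ => by rw [mul_assoc]
        _ = (counit (R := k) (r.left i) * μ (r.right i * ρ.right j)) • ρ.left j := by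
            rw [hanti, smul_mul_assoc, one_mul, smul_smul, mul_comm]
    calc ∑ j ∈ ρ.index, ∑ i ∈ r.index, ∑ n ∈ (rL i).index,
          μ (r.right i * ρ.right j) • (S ((rL i).left n) * ((rL i).right n * ρ.left j))
        = ∑ j ∈ ρ.index, ∑ i ∈ r.index,
            (counit (R := k) (r.left i) * μ (r.right i * ρ.right j)) • ρ.left j :=
          Finset.sum_congr rfl fun j hj => Finset.sum_congr rfl fun i hi => step1 j hj i hi
      _ = ∑ j ∈ ρ.index, counit (R := k) (ρ.right j) • ρ.left j := by
          refine Finset.sum_congr rfl fun j _ => ?_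
          rw [← Finset.sum_smul]
          congr 1
          calc ∑ i ∈ r.index, counit (R := k) (r.left i) * μ (r.right i * ρ.right j)
              = μ ((∑ i ∈ r.index, counit (R := k) (r.left i) • r.right i) * ρ.right j) := by
                rw [Finset.sum_mul, map_sum]
                exact Finset.sum_congr rfl fun i _ => by
                  rw [smul_mul_assoc, map_smul, smul_eq_mul]
            _ = counit (R := k) (ρ.right j) := by rw [counit_left e r, hμe']
      _ = x := counit_right x ρ
  have rhs_eval : ∑ j ∈ ρ.index, ∑ i ∈ r.index, ∑ m ∈ (rR i).index,
        μ ((rR i).right m * ρ.right j) • (S (r.left i) * ((rR i).left m * ρ.left j))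
      = ∑ i ∈ r.index, μ (r.right i * x) • S (r.left i) := by
    rw [Finset.sum_comm]
    refine Finset.sum_congr rfl fun i _ => ?_
    have key : ∑ j ∈ ρ.index, ∑ m ∈ (rR i).index,
        μ ((rR i).right m * ρ.right j) • ((rR i).left m * ρ.left j) = μ (r.right i * x) • 1 := by
      rw [Finset.sum_comm, ← Finset.sum_product']
      have h := int_right' hμ1 (r.right i * x) (mulRepr (rR i) ρ)
      simpa [mulRepr] using h
    calc ∑ j ∈ ρ.index, ∑ m ∈ (rR i).index,
          μ ((rR i).right m * ρ.right j) • (S (r.left i) * ((rR i).left m * ρ.left j))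
        = S (r.left i) * ∑ j ∈ ρ.index, ∑ m ∈ (rR i).index,
            μ ((rR i).right m * ρ.right j) • ((rR i).left m * ρ.left j) := by
          rw [Finset.mul_sum]
          exact Finset.sum_congr rfl fun j _ => by
            rw [Finset.mul_sum]
            exact Finset.sum_congr rfl fun m _ => (mul_smul_comm _ _ _).symm
      _ = μ (r.right i * x) • S (r.left i) := by rw [key, mul_smul_comm, mul_one]
  rw [← rhs_eval, ← main2, lhs_eval]

/-- The shift identity `(1 ⊗ x) Δ(e) = (S(x) ⊗ 1) Δ(e)` for a left cointegral `e`. -/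
lemma shift_lemma {k H : Type*} [CommSemiring k] [Semiring H] [HopfAlgebra k H]
    (e : H) (he1 : ∀ y : H, y * e = counit (R := k) y • e) (x : H) :
    (1 ⊗ₜ[k] x) * comul (R := k) e = (antipode (R := k) x ⊗ₜ[k] (1 : H)) * comul (R := k) e := by
  classical
  set S : H →ₗ[k] H := antipode (R := k) with hSdef
  set r := ℛ k e with hr
  set ρ := ℛ k x with hρ
  set ρL : (j : ρ.ι) → Coalgebra.Repr k (ρ.left j) (H × H) := fun j => ℛ k (ρ.left j) with hρL
  set ρR : (j : ρ.ι) → Coalgebra.Repr k (ρ.right j) (H × H) := fun j => ℛ k (ρ.right j) with hρR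
  have hco := Coalgebra.sum_tmul_tmul_eq ρ ρL ρR
  have main : ∀ a b : H,
      ∑ j ∈ ρ.index, ∑ n ∈ (ρL j).index,
        (S ((ρL j).left n) * ((ρL j).right n * a)) ⊗ₜ[k] (ρ.right j * b)
      = ∑ j ∈ ρ.index, ∑ m ∈ (ρR j).index,
        (S (ρ.left j) * ((ρR j).left m * a)) ⊗ₜ[k] ((ρR j).right m * b) := by
    intro a b
    set G : H ⊗[k] (H ⊗[k] H) →ₗ[k] H ⊗[k] H :=
      (LinearMap.rTensor H (LinearMap.mul' k H)) ∘ₗ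
      (TensorProduct.assoc k H H H).symm.toLinearMap ∘ₗ
      (LinearMap.rTensor (H ⊗[k] H) S) ∘ₗ
      (LinearMap.lTensor H
        (TensorProduct.map (LinearMap.mulRight k a) (LinearMap.mulRight k b))) with hG
    have h := congrArg (⇑G) hco
    simp only [hG, map_sum, coe_comp, Function.comp_apply, lTensor_tmul, rTensor_tmul,
      TensorProduct.map_tmul, LinearEquiv.coe_coe, TensorProduct.assoc_symm_tmul,
      mulRight_apply, mul'_apply] at h
    exact h
  have main2 : ∑ i ∈ r.index, ∑ j ∈ ρ.index, ∑ n ∈ (ρL j).index,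
        (S ((ρL j).left n) * ((ρL j).right n * r.left i)) ⊗ₜ[k] (ρ.right j * r.right i)
      = ∑ i ∈ r.index, ∑ j ∈ ρ.index, ∑ m ∈ (ρR j).index,
        (S (ρ.left j) * ((ρR j).left m * r.left i)) ⊗ₜ[k] ((ρR j).right m * r.right i) :=
    Finset.sum_congr rfl fun i _ => main (r.left i) (r.right i)
  have lhs_eval : ∑ i ∈ r.index, ∑ j ∈ ρ.index, ∑ n ∈ (ρL j).index,
        (S ((ρL j).left n) * ((ρL j).right n * r.left i)) ⊗ₜ[k] (ρ.right j * r.right i)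
      = (1 ⊗ₜ[k] x) * comul (R := k) e := by
    have step1 : ∀ i ∈ r.index, ∀ j ∈ ρ.index,
        ∑ n ∈ (ρL j).index,
          (S ((ρL j).left n) * ((ρL j).right n * r.left i)) ⊗ₜ[k] (ρ.right j * r.right i)
        = counit (R := k) (ρ.left j) • (r.left i ⊗ₜ[k] (ρ.right j * r.right i)) := by
      intro i _ j _
      have hanti := HopfAlgebra.sum_antipode_mul_eq_smul (ρL j)
      calc ∑ n ∈ (ρL j).index,
            (S ((ρL j).left n) * ((ρL j).right n * r.left i)) ⊗ₜ[k] (ρ.right j * r.right i)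
          = ((∑ n ∈ (ρL j).index, S ((ρL j).left n) * (ρL j).right n) * r.left i)
              ⊗ₜ[k] (ρ.right j * r.right i) := by
            rw [Finset.sum_mul, TensorProduct.sum_tmul]
            exact Finset.sum_congr rfl fun n _ => by rw [mul_assoc]
        _ = counit (R := k) (ρ.left j) • (r.left i ⊗ₜ[k] (ρ.right j * r.right i)) := by
            rw [hanti, smul_mul_assoc, one_mul, TensorProduct.smul_tmul']
    calc ∑ i ∈ r.index, ∑ j ∈ ρ.index, ∑ n ∈ (ρL j).index,
          (S ((ρL j).left n) * ((ρL j).right n * r.left i)) ⊗ₜ[k] (ρ.right j * r.right i)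
        = ∑ i ∈ r.index, ∑ j ∈ ρ.index,
            counit (R := k) (ρ.left j) • (r.left i ⊗ₜ[k] (ρ.right j * r.right i)) :=
          Finset.sum_congr rfl fun i hi => Finset.sum_congr rfl fun j hj => step1 i hi j hj
      _ = ∑ i ∈ r.index, r.left i ⊗ₜ[k] (x * r.right i) := by
          refine Finset.sum_congr rfl fun i _ => ?_
          simp only [← TensorProduct.tmul_smul]
          rw [← TensorProduct.tmul_sum]
          congr 1
          calc ∑ j ∈ ρ.index, counit (R := k) (ρ.left j) • (ρ.right j * r.right i)
              = (∑ j ∈ ρ.index, counit (R := k) (ρ.left j) • ρ.right j) * r.right i := by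
                rw [Finset.sum_mul]
                exact Finset.sum_congr rfl fun j _ => (smul_mul_assoc _ _ _).symm
            _ = x * r.right i := by rw [counit_left x ρ]
      _ = (1 ⊗ₜ[k] x) * comul (R := k) e := by
          rw [← r.eq, Finset.mul_sum]
          exact Finset.sum_congr rfl fun i _ => by
            rw [Algebra.TensorProduct.tmul_mul_tmul, one_mul]
  have rhs_eval : ∑ i ∈ r.index, ∑ j ∈ ρ.index, ∑ m ∈ (ρR j).index,
        (S (ρ.left j) * ((ρR j).left m * r.left i)) ⊗ₜ[k] ((ρR j).right m * r.right i)
      = (S x ⊗ₜ[k] (1 : H)) * comul (R := k) e := by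
    rw [Finset.sum_comm]
    have step1 : ∀ j ∈ ρ.index,
        ∑ i ∈ r.index, ∑ m ∈ (ρR j).index,
          (S (ρ.left j) * ((ρR j).left m * r.left i)) ⊗ₜ[k] ((ρR j).right m * r.right i)
        = counit (R := k) (ρ.right j) • ((S (ρ.left j) ⊗ₜ[k] (1:H)) * comul (R := k) e) := by
      intro j _
      have hmul : ∑ i ∈ r.index, ∑ m ∈ (ρR j).index,
          ((ρR j).left m * r.left i) ⊗ₜ[k] ((ρR j).right m * r.right i)
          = counit (R := k) (ρ.right j) • comul (R := k) e := by
        rw [Finset.sum_comm, ← Finset.sum_product']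
        have h := (mulRepr (ρR j) r).eq
        have h2 : CoalgebraStruct.comul (R := k) (ρ.right j * e)
            = counit (R := k) (ρ.right j) • CoalgebraStruct.comul (R := k) e := by
          rw [he1 (ρ.right j), map_smul]
        rw [h2] at h
        simpa [mulRepr] using h
      calc ∑ i ∈ r.index, ∑ m ∈ (ρR j).index,
            (S (ρ.left j) * ((ρR j).left m * r.left i)) ⊗ₜ[k] ((ρR j).right m * r.right i)
          = (S (ρ.left j) ⊗ₜ[k] (1:H)) * ∑ i ∈ r.index, ∑ m ∈ (ρR j).index,
              ((ρR j).left m * r.left i) ⊗ₜ[k] ((ρR j).right m * r.right i) := by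
            rw [Finset.mul_sum]
            refine Finset.sum_congr rfl fun i _ => ?_
            rw [Finset.mul_sum]
            exact Finset.sum_congr rfl fun m _ => by
              rw [Algebra.TensorProduct.tmul_mul_tmul, one_mul]
        _ = counit (R := k) (ρ.right j) • ((S (ρ.left j) ⊗ₜ[k] (1:H)) * comul (R := k) e) := by
            rw [hmul, mul_smul_comm]
    calc ∑ j ∈ ρ.index, ∑ i ∈ r.index, ∑ m ∈ (ρR j).index,
          (S (ρ.left j) * ((ρR j).left m * r.left i)) ⊗ₜ[k] ((ρR j).right m * r.right i)
        = ∑ j ∈ ρ.index,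
            counit (R := k) (ρ.right j) • ((S (ρ.left j) ⊗ₜ[k] (1:H)) * comul (R := k) e) :=
          Finset.sum_congr rfl fun j hj => step1 j hj
      _ = (S x ⊗ₜ[k] (1 : H)) * comul (R := k) e := by
          simp only [← smul_mul_assoc]
          rw [← Finset.sum_mul]
          congr 1
          simp only [TensorProduct.smul_tmul']
          rw [← TensorProduct.sum_tmul]
          congr 1
          rw [show ∑ j ∈ ρ.index, counit (R := k) (ρ.right j) • S (ρ.left j)
              = S (∑ j ∈ ρ.index, counit (R := k) (ρ.right j) • ρ.left j) by
            rw [map_sum]; exact Finset.sum_congr rfl fun j _ => (map_smul S _ _).symm]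
          rw [counit_right x ρ]
  rw [← lhs_eval, main2, rhs_eval]

/-- For a finite-dimensional involutory Hopf algebra `H` over a field `k` with a
two-sided integral `μ ∈ H*` and a two-sided cointegral `e ∈ H` such that `μ(e) = 1`, the
cointegral `e` is cocommutative: `Σ e₍₁₎ ⊗ e₍₂₎ = Σ e₍₂₎ ⊗ e₍₁₎` in `H ⊗ H`. -/
theorem cointegral_cocommutative
    {k H : Type*} [Field k] [Ring H] [HopfAlgebra k H] [FiniteDimensional k H]
    (hinv : ∀ x : H, antipode (R := k) (antipode (R := k) x) = x)
    (μ : Module.Dual k H) (e : H)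
    (hμ : ∀ x : H,
      TensorProduct.rid k H (LinearMap.lTensor H μ (comul (R := k) x)) = μ x • (1 : H) ∧
      TensorProduct.lid k H (LinearMap.rTensor H μ (comul (R := k) x)) = μ x • (1 : H))
    (he : ∀ x : H, x * e = counit (R := k) x • e ∧ e * x = counit (R := k) x • e)
    (hμe : μ e = 1) :
    TensorProduct.comm k H H (comul (R := k) e) = comul (R := k) e := by
  classical
  set S : H →ₗ[k] H := antipode (R := k) with hSdef
  have hμ1 : ∀ y : H,
      TensorProduct.rid k H (LinearMap.lTensor H μ (comul (R := k) y)) = μ y • (1 : H) :=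
    fun y => (hμ y).1
  have hμ2 : ∀ y : H,
      TensorProduct.lid k H (LinearMap.rTensor H μ (comul (R := k) y)) = μ y • (1 : H) :=
    fun y => (hμ y).2
  have he1 : ∀ y : H, y * e = counit (R := k) y • e := fun y => (he y).1
  have hμe' : ∀ y : H, μ (e * y) = counit (R := k) y := by
    intro y
    rw [(he y).2, map_smul, hμe, smul_eq_mul, mul_one]
  set r := ℛ k e with hrdef
  have hstar : ∀ x : H, ∑ i ∈ r.index, μ (r.right i * x) • S (r.left i) = x :=
    fun x => star_lemma μ e hμ1 hμe' x r
  -- shift lemma and its flipped version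
  have hshift : ∀ x : H,
      (1 ⊗ₜ[k] x) * comul (R := k) e = (S x ⊗ₜ[k] (1 : H)) * comul (R := k) e :=
    fun x => shift_lemma e he1 x
  have hshift' : ∀ x : H,
      (x ⊗ₜ[k] (1 : H)) * comul (R := k) e = (1 ⊗ₜ[k] S x) * comul (R := k) e := by
    intro x
    have h := hshift (S x)
    rw [show antipode (R := k) (antipode (R := k) x) = x from hinv x] at h
    exact h.symm
  -- lemA : ∑ μ(y e₁) • e₂ = S y
  have lemA : ∀ y : H, ∑ i ∈ r.index, μ (y * r.left i) • r.right i = S y := by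
    intro y
    have h := congrArg (⇑((TensorProduct.lid k H).toLinearMap ∘ₗ LinearMap.rTensor H μ))
      (hshift' y)
    rw [← r.eq] at h
    simp only [Finset.mul_sum, Algebra.TensorProduct.tmul_mul_tmul, one_mul, mul_one,
      map_sum, coe_comp, Function.comp_apply, rTensor_tmul, LinearEquiv.coe_toLinearMap,
      TensorProduct.lid_tmul] at h
    rw [h]
    have : ∑ i ∈ r.index, μ (r.left i) • (S y * r.right i)
        = S y * ∑ i ∈ r.index, μ (r.left i) • r.right i := by
      rw [Finset.mul_sum]
      exact Finset.sum_congr rfl fun i _ => (mul_smul_comm _ _ _).symm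
    rw [this, int_left' hμ2 e r, hμe, one_smul, mul_one]
  -- lemB : ∑ μ(y e₂) • e₁ = S y
  have lemB : ∀ y : H, ∑ i ∈ r.index, μ (y * r.right i) • r.left i = S y := by
    intro y
    have h := congrArg (⇑((TensorProduct.rid k H).toLinearMap ∘ₗ LinearMap.lTensor H μ))
      (hshift y)
    rw [← r.eq] at h
    simp only [Finset.mul_sum, Algebra.TensorProduct.tmul_mul_tmul, one_mul, mul_one,
      map_sum, coe_comp, Function.comp_apply, lTensor_tmul, LinearEquiv.coe_toLinearMap,
      TensorProduct.rid_tmul] at h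
    rw [h]
    have : ∑ i ∈ r.index, μ (r.right i) • (S y * r.left i)
        = S y * ∑ i ∈ r.index, μ (r.right i) • r.left i := by
      rw [Finset.mul_sum]
      exact Finset.sum_congr rfl fun i _ => (mul_smul_comm _ _ _).symm
    rw [this, int_right' hμ1 e r, hμe, one_smul, mul_one]
  -- chain 1 : ∑ e₂ ⊗ e₁ = ∑ S e₂ ⊗ S e₁
  have chain1 : ∑ i ∈ r.index, r.right i ⊗ₜ[k] r.left i
      = ∑ j ∈ r.index, S (r.right j) ⊗ₜ[k] S (r.left j) := by
    calc ∑ i ∈ r.index, r.right i ⊗ₜ[k] r.left i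
        = ∑ i ∈ r.index, r.right i ⊗ₜ[k]
            (∑ j ∈ r.index, μ (r.right j * r.left i) • S (r.left j)) :=
          Finset.sum_congr rfl fun i _ => by rw [hstar (r.left i)]
      _ = ∑ i ∈ r.index, ∑ j ∈ r.index,
            μ (r.right j * r.left i) • (r.right i ⊗ₜ[k] S (r.left j)) := by
          refine Finset.sum_congr rfl fun i _ => ?_
          rw [TensorProduct.tmul_sum]
          exact Finset.sum_congr rfl fun j _ => by rw [TensorProduct.tmul_smul]
      _ = ∑ j ∈ r.index, ∑ i ∈ r.index,
            μ (r.right j * r.left i) • (r.right i ⊗ₜ[k] S (r.left j)) := Finset.sum_comm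
      _ = ∑ j ∈ r.index,
            (∑ i ∈ r.index, μ (r.right j * r.left i) • r.right i) ⊗ₜ[k] S (r.left j) := by
          refine Finset.sum_congr rfl fun j _ => ?_
          rw [TensorProduct.sum_tmul]
          exact Finset.sum_congr rfl fun i _ => by rw [TensorProduct.smul_tmul']
      _ = ∑ j ∈ r.index, S (r.right j) ⊗ₜ[k] S (r.left j) :=
          Finset.sum_congr rfl fun j _ => by rw [lemA (r.right j)]
  -- chain 2 : ∑ e₁ ⊗ e₂ = ∑ S e₂ ⊗ S e₁
  have chain2 : ∑ i ∈ r.index, r.left i ⊗ₜ[k] r.right i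
      = ∑ j ∈ r.index, S (r.right j) ⊗ₜ[k] S (r.left j) := by
    calc ∑ i ∈ r.index, r.left i ⊗ₜ[k] r.right i
        = ∑ i ∈ r.index, r.left i ⊗ₜ[k]
            (∑ j ∈ r.index, μ (r.right j * r.right i) • S (r.left j)) :=
          Finset.sum_congr rfl fun i _ => by rw [hstar (r.right i)]
      _ = ∑ i ∈ r.index, ∑ j ∈ r.index,
            μ (r.right j * r.right i) • (r.left i ⊗ₜ[k] S (r.left j)) := by
          refine Finset.sum_congr rfl fun i _ => ?_
          rw [TensorProduct.tmul_sum]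
          exact Finset.sum_congr rfl fun j _ => by rw [TensorProduct.tmul_smul]
      _ = ∑ j ∈ r.index, ∑ i ∈ r.index,
            μ (r.right j * r.right i) • (r.left i ⊗ₜ[k] S (r.left j)) := Finset.sum_comm
      _ = ∑ j ∈ r.index,
            (∑ i ∈ r.index, μ (r.right j * r.right i) • r.left i) ⊗ₜ[k] S (r.left j) := by
          refine Finset.sum_congr rfl fun j _ => ?_
          rw [TensorProduct.sum_tmul]
          exact Finset.sum_congr rfl fun i _ => by rw [TensorProduct.smul_tmul']
      _ = ∑ j ∈ r.index, S (r.right j) ⊗ₜ[k] S (r.left j) :=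
          Finset.sum_congr rfl fun j _ => by rw [lemB (r.right j)]
  -- conclude
  rw [← r.eq, map_sum]
  simp only [TensorProduct.comm_tmul]
  rw [chain1, ← chain2]
end

section
/- Let H be a finite-dimensional involutory Hopf algebra over a field k with a two-sided integral μ ∈ H* and a two-sided cointegral e ∈ H such that μ(e) = 1. Then μ and e are invariant under the antipode: μ(S(x)) = μ(x) for all x ∈ H, and S(e) = e. -/
open TensorProduct Coalgebra HopfAlgebra

private lemma sum_counit_right_smul_left {k H : Type*} [Field k] [Ring H] [HopfAlgebra k H]
    {ι : Type*} {y : H} (r : Coalgebra.Repr k y ι) :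
    ∑ i ∈ r.index, counit (R := k) (r.right i) • r.left i = y := by
  have h2 := congrArg (TensorProduct.rid k H) (Coalgebra.sum_tmul_counit_eq (R := k) r)
  simp only [map_sum, TensorProduct.rid_tmul, one_smul] at h2
  exact h2

private lemma sum_counit_left_smul_right {k H : Type*} [Field k] [Ring H] [HopfAlgebra k H]
    {ι : Type*} {y : H} (r : Coalgebra.Repr k y ι) :
    ∑ i ∈ r.index, counit (R := k) (r.left i) • r.right i = y := by
  have h2 := congrArg (TensorProduct.lid k H) (Coalgebra.sum_counit_tmul_eq (R := k) r)
  simp only [map_sum, TensorProduct.lid_tmul, one_smul] at h2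
  exact h2

private lemma keyB {k H : Type*} [Field k] [Ring H] [HopfAlgebra k H]
    (μ : Module.Dual k H) (e : H)
    (hμ1 : ∀ y : H,
      TensorProduct.rid k H (LinearMap.lTensor H μ (comul (R := k) y)) = μ y • (1 : H))
    (he1 : ∀ y : H, y * e = counit (R := k) y • e)
    {ι : Type*} (re : Coalgebra.Repr k e ι) (x : H) :
    ∑ m ∈ re.index, μ (x * re.right m) • re.left m = μ e • antipode (R := k) x := by
  classical
  set Φ : H ⊗[k] H →ₗ[k] H :=
    (TensorProduct.rid k H).toLinearMap ∘ₗ LinearMap.lTensor H μ ∘ₗ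
      LinearMap.mulRight k (comul (R := k) e) with hΦ
  have Φ_tmul : ∀ v d : H,
      Φ (v ⊗ₜ[k] d) = ∑ m ∈ re.index, μ (d * re.right m) • (v * re.left m) := by
    intro v d
    simp only [hΦ, LinearMap.coe_comp, Function.comp_apply, LinearMap.mulRight_apply,
      LinearEquiv.coe_coe]
    rw [← re.eq, Finset.mul_sum, map_sum, map_sum]
    refine Finset.sum_congr rfl fun m _ => ?_
    rw [Algebra.TensorProduct.tmul_mul_tmul, LinearMap.lTensor_tmul, TensorProduct.rid_tmul]
  have Φ_comul : ∀ d : H,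
      Φ (comul (R := k) d) = (counit (R := k) d * μ e) • (1 : H) := by
    intro d
    simp only [hΦ, LinearMap.coe_comp, Function.comp_apply, LinearMap.mulRight_apply,
      LinearEquiv.coe_coe]
    rw [← Bialgebra.comul_mul, hμ1 (d * e), he1 d, map_smul, smul_eq_mul]
  set Ψ : H ⊗[k] (H ⊗[k] H) →ₗ[k] H :=
    LinearMap.mul' k H ∘ₗ TensorProduct.map (antipode (R := k)) Φ with hΨ
  have Ψ_tmul : ∀ (u : H) (z : H ⊗[k] H), Ψ (u ⊗ₜ[k] z) = antipode (R := k) u * Φ z := by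
    intro u z
    simp only [hΨ, LinearMap.coe_comp, Function.comp_apply, TensorProduct.map_tmul,
      LinearMap.mul'_apply]
  have rx := Coalgebra.Repr.arbitrary k x
  set rc : (i : H × H) → Coalgebra.Repr k (rx.left i) (H × H) :=
    fun i => Coalgebra.Repr.arbitrary k _ with hrc
  set rd : (i : H × H) → Coalgebra.Repr k (rx.right i) (H × H) :=
    fun i => Coalgebra.Repr.arbitrary k _ with hrd
  have key := congrArg Ψ (Coalgebra.sum_tmul_tmul_eq (R := k) rx rc rd)
  rw [map_sum, map_sum] at key
  simp_rw [map_sum, Ψ_tmul] at key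
  -- right-hand side computation
  have hR : ∀ i ∈ rx.index,
      ∑ j ∈ (rd i).index,
        antipode (R := k) (rx.left i) * Φ ((rd i).left j ⊗ₜ[k] (rd i).right j)
        = (counit (R := k) (rx.right i) * μ e) • antipode (R := k) (rx.left i) := by
    intro i _
    rw [← Finset.mul_sum, ← map_sum, (rd i).eq, Φ_comul, mul_smul_comm, mul_one]
  -- left-hand side computation
  have hL : ∀ i ∈ rx.index,
      ∑ j ∈ (rc i).index,
        antipode (R := k) ((rc i).left j) * Φ ((rc i).right j ⊗ₜ[k] rx.right i)
        = ∑ m ∈ re.index,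
            (counit (R := k) (rx.left i) * μ (rx.right i * re.right m)) • re.left m := by
    intro i _
    simp_rw [Φ_tmul, Finset.mul_sum]
    rw [Finset.sum_comm]
    refine Finset.sum_congr rfl fun m _ => ?_
    have : ∀ j ∈ (rc i).index,
        antipode (R := k) ((rc i).left j) *
          (μ (rx.right i * re.right m) • ((rc i).right j * re.left m))
        = μ (rx.right i * re.right m) •
            ((antipode (R := k) ((rc i).left j) * (rc i).right j) * re.left m) := by
      intro j _
      rw [mul_smul_comm, mul_assoc]
    rw [Finset.sum_congr rfl this, ← Finset.smul_sum, ← Finset.sum_mul,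
      HopfAlgebra.sum_antipode_mul_eq_smul (rc i), smul_mul_assoc, one_mul,
      smul_smul, mul_comm]
  rw [Finset.sum_congr rfl hL, Finset.sum_congr rfl hR] at key
  -- simplify both sides of key
  have hxr : ∑ i ∈ rx.index, counit (R := k) (rx.right i) • rx.left i = x :=
    sum_counit_right_smul_left rx
  have hxl : ∑ i ∈ rx.index, counit (R := k) (rx.left i) • rx.right i = x :=
    sum_counit_left_smul_right rx
  have hright : ∑ i ∈ rx.index,
      (counit (R := k) (rx.right i) * μ e) • antipode (R := k) (rx.left i)
      = μ e • antipode (R := k) x := by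
    conv_rhs => rw [← hxr]
    rw [map_sum, Finset.smul_sum]
    refine Finset.sum_congr rfl fun i _ => ?_
    rw [map_smul, smul_smul, mul_comm]
  have hleft : ∑ i ∈ rx.index, ∑ m ∈ re.index,
      (counit (R := k) (rx.left i) * μ (rx.right i * re.right m)) • re.left m
      = ∑ m ∈ re.index, μ (x * re.right m) • re.left m := by
    rw [Finset.sum_comm]
    refine Finset.sum_congr rfl fun m _ => ?_
    rw [← Finset.sum_smul]
    congr 1
    conv_rhs => rw [← hxl]
    rw [Finset.sum_mul, map_sum]
    exact Finset.sum_congr rfl fun i _ => by rw [smul_mul_assoc, map_smul, smul_eq_mul]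
  rw [hright, hleft] at key
  exact key

/-- For a finite-dimensional involutory Hopf algebra `H` over a field `k` with a
two-sided integral `μ ∈ H*` and a two-sided cointegral `e ∈ H` such that `μ(e) = 1`, both `μ`
and `e` are invariant under the antipode: `μ(S(x)) = μ(x)` for all `x`, and `S(e) = e`. -/
theorem integral_cointegral_antipode_invariant
    {k H : Type*} [Field k] [Ring H] [HopfAlgebra k H] [FiniteDimensional k H]
    (hinv : ∀ x : H, antipode (R := k) (antipode (R := k) x) = x)
    (μ : Module.Dual k H) (e : H)
    (hμ : ∀ x : H,
      TensorProduct.rid k H (LinearMap.lTensor H μ (comul (R := k) x)) = μ x • (1 : H) ∧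
      TensorProduct.lid k H (LinearMap.rTensor H μ (comul (R := k) x)) = μ x • (1 : H))
    (he : ∀ x : H, x * e = counit (R := k) x • e ∧ e * x = counit (R := k) x • e)
    (hμe : μ e = 1) :
    (∀ x : H, μ (antipode (R := k) x) = μ x) ∧ antipode (R := k) e = e := by
  classical
  have re := Coalgebra.Repr.arbitrary k e
  have hB : ∀ x : H,
      ∑ m ∈ re.index, μ (x * re.right m) • re.left m = antipode (R := k) x := by
    intro x
    rw [keyB μ e (fun y => (hμ y).1) (fun y => (he y).1) re x, hμe, one_smul]
  have hint : ∑ m ∈ re.index, μ (re.left m) • re.right m = (1 : H) := by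
    have h := (hμ e).2
    rw [← re.eq] at h
    simp only [map_sum, LinearMap.rTensor_tmul, TensorProduct.lid_tmul] at h
    rw [h, hμe, one_smul]
  constructor
  · intro x
    have h := congrArg μ (hB x)
    rw [map_sum] at h
    rw [← h]
    calc ∑ m ∈ re.index, μ (μ (x * re.right m) • re.left m)
        = μ (x * ∑ m ∈ re.index, μ (re.left m) • re.right m) := by
          rw [Finset.mul_sum, map_sum]
          refine Finset.sum_congr rfl fun m _ => ?_
          rw [mul_smul_comm, map_smul, map_smul, smul_eq_mul, smul_eq_mul, mul_comm]
      _ = μ x := by rw [hint, mul_one]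
  · rw [← hB e]
    have : ∀ m ∈ re.index, μ (e * re.right m) • re.left m
        = counit (R := k) (re.right m) • re.left m := by
      intro m _
      rw [(he (re.right m)).2, map_smul, hμe, smul_eq_mul, mul_one]
    rw [Finset.sum_congr rfl this]
    exact sum_counit_right_smul_left re
end

section
/- Let H be a finite-dimensional involutory Hopf algebra over a field k with a two-sided integral μ ∈ H*. Then for all x, y ∈ H the following identities hold in H: Σ S(x₍₁₎)·μ(x₍₂₎·y) = Σ y₍₁₎·μ(x·y₍₂₎), and Σ μ(x₍₁₎·y)·x₍₂₎ = Σ μ(x·y₍₁₎)·S(y₍₂₎). -/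
open TensorProduct Coalgebra HopfAlgebra

lemma rid_lTensor_repr {k H : Type*} [Field k] [Ring H] [HopfAlgebra k H]
    (φ : H →ₗ[k] k) {z : H} {ι : Type*} (r : Coalgebra.Repr k z ι) :
    TensorProduct.rid k H (LinearMap.lTensor H φ (comul (R := k) z)) =
      ∑ i ∈ r.index, φ (r.right i) • r.left i := by
  rw [← r.eq]; simp

lemma lid_rTensor_repr {k H : Type*} [Field k] [Ring H] [HopfAlgebra k H]
    (φ : H →ₗ[k] k) {z : H} {ι : Type*} (r : Coalgebra.Repr k z ι) :
    TensorProduct.lid k H (LinearMap.rTensor H φ (comul (R := k) z)) =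
      ∑ i ∈ r.index, φ (r.left i) • r.right i := by
  rw [← r.eq]; simp

/-- For a finite-dimensional involutory Hopf algebra `H` over a field `k` with a
two-sided integral `μ ∈ H*`, for all `x, y ∈ H` the identities
`Σ S(x₍₁₎)·μ(x₍₂₎·y) = Σ y₁·μ(x·y₍₂₎)` and `Σ μ(x₍₁₎·y)·x₍₂₎ = Σ μ(x·y₍₁₎)·S(y₍₂₎)`
hold in `H`. -/
theorem integral_comul_slide
    {k H : Type*} [Field k] [Ring H] [HopfAlgebra k H] [FiniteDimensional k H]
    (hinv : ∀ x : H, antipode (R := k) (antipode (R := k) x) = x)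
    (μ : Module.Dual k H)
    (hμ : ∀ x : H,
      TensorProduct.rid k H (LinearMap.lTensor H μ (comul (R := k) x)) = μ x • (1 : H) ∧
      TensorProduct.lid k H (LinearMap.rTensor H μ (comul (R := k) x)) = μ x • (1 : H)) :
    ∀ x y : H,
      antipode (R := k)
          (TensorProduct.rid k H
            (LinearMap.lTensor H (μ ∘ₗ LinearMap.mulRight k y) (comul (R := k) x)))
        = TensorProduct.rid k H
            (LinearMap.lTensor H (μ ∘ₗ LinearMap.mulLeft k x) (comul (R := k) y)) ∧
      TensorProduct.lid k H
          (LinearMap.rTensor H (μ ∘ₗ LinearMap.mulRight k y) (comul (R := k) x))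
        = antipode (R := k)
            (TensorProduct.lid k H
              (LinearMap.rTensor H (μ ∘ₗ LinearMap.mulLeft k x) (comul (R := k) y))) := by
  intro x y
  classical
  have rx : Coalgebra.Repr k x (H × H) := ℛ k x
  have ry : Coalgebra.Repr k y (H × H) := ℛ k y
  have ra : ∀ i, Coalgebra.Repr k (rx.left i) (H × H) := fun i => ℛ k _
  have rb : ∀ i, Coalgebra.Repr k (rx.right i) (H × H) := fun i => ℛ k _
  have rc : ∀ j, Coalgebra.Repr k (ry.left j) (H × H) := fun j => ℛ k _
  have rd : ∀ j, Coalgebra.Repr k (ry.right j) (H × H) := fun j => ℛ k _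
  -- the two "convolution with μ" operators
  set N : H →ₗ[k] H :=
    ∑ j ∈ ry.index, ((μ ∘ₗ LinearMap.mulRight k (ry.right j)).smulRight (ry.left j)) with hN
  set N2 : H →ₗ[k] H :=
    ∑ i ∈ rx.index, ((μ ∘ₗ LinearMap.mulLeft k (rx.left i)).smulRight (rx.right i)) with hN2
  have hNapp : ∀ w : H, N w = ∑ j ∈ ry.index, μ (w * ry.right j) • ry.left j := by
    intro w
    simp [hN, LinearMap.sum_apply]
  have hN2app : ∀ w : H, N2 w = ∑ i ∈ rx.index, μ (rx.left i * w) • rx.right i := by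
    intro w
    simp [hN2, LinearMap.sum_apply]
  -- counit identities
  have hx : ∑ i ∈ rx.index, counit (R := k) (rx.left i) • rx.right i = x := by
    have h := congrArg (TensorProduct.lid k H) (Coalgebra.sum_counit_tmul_eq (R := k) rx)
    simp only [map_sum, TensorProduct.lid_tmul, one_smul] at h
    exact h
  have hy : ∑ j ∈ ry.index, counit (R := k) (ry.right j) • ry.left j = y := by
    have h := congrArg (TensorProduct.rid k H) (Coalgebra.sum_tmul_counit_eq (R := k) ry)
    simp only [map_sum, TensorProduct.rid_tmul, one_smul] at h
    exact h
  constructor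
  · -- first identity
    rw [rid_lTensor_repr _ rx, rid_lTensor_repr _ ry]
    simp only [LinearMap.comp_apply, LinearMap.mulRight_apply, LinearMap.mulLeft_apply,
      map_sum, map_smul]
    -- goal : Σ μ(bᵢ y) • S(aᵢ) = Σ μ(x dⱼ) • cⱼ
    have key : ∀ i, ∑ m ∈ (rb i).index, (rb i).left m * N ((rb i).right m)
        = μ (rx.right i * y) • (1 : H) := by
      intro i
      have D : ∑ m ∈ (rb i).index, ∑ j ∈ ry.index,
          ((rb i).left m * ry.left j) ⊗ₜ[k] ((rb i).right m * ry.right j)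
          = comul (R := k) (rx.right i * y) := by
        rw [Bialgebra.comul_mul, ← (rb i).eq, ← ry.eq, Finset.sum_mul_sum]
        simp [Algebra.TensorProduct.tmul_mul_tmul]
      have h2 := congrArg (fun t => TensorProduct.rid k H (LinearMap.lTensor H μ t)) D
      simp only [map_sum, LinearMap.lTensor_tmul, TensorProduct.rid_tmul] at h2
      rw [(hμ (rx.right i * y)).1] at h2
      rw [← h2]
      refine Finset.sum_congr rfl fun m _ => ?_
      rw [hNapp, Finset.mul_sum]
      exact Finset.sum_congr rfl fun j _ => (mul_smul_comm _ _ _)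
    have hL := congrArg
      (LinearMap.mul' k H ∘ₗ
        TensorProduct.map (antipode (R := k))
          (LinearMap.mul' k H ∘ₗ LinearMap.lTensor H N))
      (Coalgebra.sum_tmul_tmul_eq rx ra rb)
    simp only [map_sum, LinearMap.comp_apply, TensorProduct.map_tmul,
      LinearMap.lTensor_tmul, LinearMap.mul'_apply] at hL
    calc
      ∑ i ∈ rx.index, μ (rx.right i * y) • antipode (R := k) (rx.left i)
          = ∑ i ∈ rx.index, antipode (R := k) (rx.left i) * (μ (rx.right i * y) • (1 : H)) := by
            refine Finset.sum_congr rfl fun i _ => ?_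
            rw [mul_smul_comm, mul_one]
      _ = ∑ i ∈ rx.index, antipode (R := k) (rx.left i) *
            (∑ m ∈ (rb i).index, (rb i).left m * N ((rb i).right m)) := by
            refine Finset.sum_congr rfl fun i _ => ?_
            rw [key i]
      _ = ∑ i ∈ rx.index, ∑ m ∈ (rb i).index,
            antipode (R := k) (rx.left i) * ((rb i).left m * N ((rb i).right m)) := by
            exact Finset.sum_congr rfl fun i _ => Finset.mul_sum _ _ _
      _ = ∑ i ∈ rx.index, ∑ m ∈ (ra i).index,
            antipode (R := k) ((ra i).left m) * ((ra i).right m * N (rx.right i)) := hL.symm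
      _ = ∑ i ∈ rx.index, algebraMap k H (counit (R := k) (rx.left i)) * N (rx.right i) := by
            refine Finset.sum_congr rfl fun i _ => ?_
            rw [← HopfAlgebra.sum_antipode_mul_eq_algebraMap_counit (ra i), Finset.sum_mul]
            exact Finset.sum_congr rfl fun m _ => (mul_assoc _ _ _).symm
      _ = ∑ i ∈ rx.index, counit (R := k) (rx.left i) • N (rx.right i) := by
            refine Finset.sum_congr rfl fun i _ => ?_
            rw [Algebra.smul_def]
      _ = N (∑ i ∈ rx.index, counit (R := k) (rx.left i) • rx.right i) := by
            rw [map_sum]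
            exact Finset.sum_congr rfl fun i _ => (map_smul N _ _).symm
      _ = N x := by rw [hx]
      _ = ∑ j ∈ ry.index, μ (x * ry.right j) • ry.left j := hNapp x
  · -- second identity
    rw [lid_rTensor_repr _ rx, lid_rTensor_repr _ ry]
    simp only [LinearMap.comp_apply, LinearMap.mulRight_apply, LinearMap.mulLeft_apply,
      map_sum, map_smul]
    -- goal : Σ μ(aᵢ y) • bᵢ = Σ μ(x cⱼ) • S(dⱼ)
    have key2 : ∀ j, ∑ m ∈ (rc j).index, N2 ((rc j).left m) * (rc j).right m
        = μ (x * ry.left j) • (1 : H) := by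
      intro j
      have D : ∑ i ∈ rx.index, ∑ m ∈ (rc j).index,
          (rx.left i * (rc j).left m) ⊗ₜ[k] (rx.right i * (rc j).right m)
          = comul (R := k) (x * ry.left j) := by
        rw [Bialgebra.comul_mul, ← rx.eq, ← (rc j).eq, Finset.sum_mul_sum]
        simp [Algebra.TensorProduct.tmul_mul_tmul]
      have h2 := congrArg (fun t => TensorProduct.lid k H (LinearMap.rTensor H μ t)) D
      simp only [map_sum, LinearMap.rTensor_tmul, TensorProduct.lid_tmul] at h2
      rw [(hμ (x * ry.left j)).2] at h2
      rw [← h2, Finset.sum_comm]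
      refine Finset.sum_congr rfl fun m _ => ?_
      rw [hN2app, Finset.sum_mul]
      exact Finset.sum_congr rfl fun i _ => (smul_mul_assoc _ _ _)
    have hL2 := congrArg
      (LinearMap.mul' k H ∘ₗ
        TensorProduct.map N2
          (LinearMap.mul' k H ∘ₗ LinearMap.lTensor H (antipode (R := k))))
      (Coalgebra.sum_tmul_tmul_eq ry rc rd)
    simp only [map_sum, LinearMap.comp_apply, TensorProduct.map_tmul,
      LinearMap.lTensor_tmul, LinearMap.mul'_apply] at hL2
    calc
      ∑ i ∈ rx.index, μ (rx.left i * y) • rx.right i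
          = N2 y := (hN2app y).symm
      _ = N2 (∑ j ∈ ry.index, counit (R := k) (ry.right j) • ry.left j) := by rw [hy]
      _ = ∑ j ∈ ry.index, counit (R := k) (ry.right j) • N2 (ry.left j) := by
            rw [map_sum]
            exact Finset.sum_congr rfl fun j _ => map_smul N2 _ _
      _ = ∑ j ∈ ry.index, N2 (ry.left j) * algebraMap k H (counit (R := k) (ry.right j)) := by
            refine Finset.sum_congr rfl fun j _ => ?_
            rw [Algebra.smul_def, Algebra.commutes]
      _ = ∑ j ∈ ry.index, ∑ m ∈ (rd j).index,
            N2 (ry.left j) * ((rd j).left m * antipode (R := k) ((rd j).right m)) := by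
            refine Finset.sum_congr rfl fun j _ => ?_
            rw [← HopfAlgebra.sum_mul_antipode_eq_algebraMap_counit (rd j), Finset.mul_sum]
      _ = ∑ j ∈ ry.index, ∑ m ∈ (rc j).index,
            N2 ((rc j).left m) * ((rc j).right m * antipode (R := k) (ry.right j)) := hL2.symm
      _ = ∑ j ∈ ry.index,
            (∑ m ∈ (rc j).index, N2 ((rc j).left m) * (rc j).right m)
              * antipode (R := k) (ry.right j) := by
            refine Finset.sum_congr rfl fun j _ => ?_
            rw [Finset.sum_mul]
            exact Finset.sum_congr rfl fun m _ => (mul_assoc _ _ _).symm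
      _ = ∑ j ∈ ry.index, (μ (x * ry.left j) • (1 : H)) * antipode (R := k) (ry.right j) := by
            refine Finset.sum_congr rfl fun j _ => ?_
            rw [key2 j]
      _ = ∑ j ∈ ry.index, μ (x * ry.left j) • antipode (R := k) (ry.right j) := by
            refine Finset.sum_congr rfl fun j _ => ?_
            rw [smul_mul_assoc, one_mul]
end
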